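/- arXiv:1810.05325 — 2 statements merged into one kernel-verified Lean document; each statement's English description precedes it below -/
import Mathlib

section
/- Let N_w ≥ 1 be a natural number, τ_w ∈ (0,1), and σ, T_s, T_c > 0 be reals. Set B = (1−τ_w)^{N_w} and C = N_w·τ_w·(1−τ_w)^{N_w−1}, and for τ_L ∈ [0,1) define p_T(τ_L) = 1 − B·(1−τ_L), p_s(τ_L) = C·(1−τ_L)/p_T(τ_L), and t_s^w(τ_L) = (p_T·p_s·T_s) / ((1−p_T)·σ + p_T·p_s·T_s + p_T·(1−p_s)·T_c) evaluated at τ_L (equivalently, t_s^w(τ_L) = C·(1−τ_L)·T_s / (B·(1−τ_L)·σ + C·(1−τ_L)·T_s + (1 − (B+C)·(1−τ_L))·T_c)). Then t_s^w is a strictly monotonically decreasing function of τ_L on [0,1). (Since a larger LTE-U contention window Z yields a smaller LTE-U transmission probability τ_L, this is the paper's claim that a greater CW size Z comes with a higher Wi-Fi channel occupancy time ratio.) -/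
/-!
Writing `u = 1 - τ_L` for the probability that LTE-U stays silent in a slot, the factor `p_T`
cancels and the occupancy ratio becomes `C u T_s / (T_c + u (B σ + C T_s - (B + C) T_c))`.
Its denominator is positive because `B + C ≤ 1` (`B` and `C` are the probabilities that none,
resp. exactly one, of the Wi-Fi stations transmits), and cross-multiplying two values reduces
the comparison to `u' T_c < u T_c` for `u' < u`.
-/

open Set

lemma one_sub_pow_mul_one_add_mul_le_one (m : ℕ) {t : ℝ} (h0 : 0 ≤ t) (h1 : t ≤ 1) :
    (1 - t) ^ m * (1 + m * t) ≤ 1 :=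
  calc (1 - t) ^ m * (1 + m * t) ≤ (1 - t) ^ m * (1 + t) ^ m := by
        gcongr
        exact one_add_mul_le_pow (by linarith) m
    _ = (1 - t ^ 2) ^ m := by rw [← mul_pow]; ring
    _ ≤ 1 := pow_le_one₀ (by nlinarith) (by nlinarith)

lemma one_sub_pow_add_mul_one_sub_pow_pred_le_one (N : ℕ) {t : ℝ} (h0 : 0 ≤ t) (h1 : t ≤ 1) :
    (1 - t) ^ N + N * t * (1 - t) ^ (N - 1) ≤ 1 := by
  cases N with
  | zero => simp
  | succ m =>
    calc (1 - t) ^ (m + 1) + ((m + 1 : ℕ) : ℝ) * t * (1 - t) ^ (m + 1 - 1)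
        = (1 - t) ^ m * (1 + m * t) := by rw [Nat.add_sub_cancel]; push_cast; ring
      _ ≤ 1 := one_sub_pow_mul_one_add_mul_le_one m h0 h1

section Occupancy

variable {B C σ Ts Tc : ℝ}

lemma occupancy_eq_of_ne {u : ℝ} (hpT : 1 - B * u ≠ 0) :
    ((1 - B * u) * (C * u / (1 - B * u)) * Ts) /
        ((1 - (1 - B * u)) * σ + (1 - B * u) * (C * u / (1 - B * u)) * Ts
          + (1 - B * u) * (1 - C * u / (1 - B * u)) * Tc)
      = C * u * Ts / (B * u * σ + C * u * Ts + (1 - (B + C) * u) * Tc) := by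
  have hcancel : (1 - B * u) * (C * u / (1 - B * u)) = C * u := mul_div_cancel₀ _ hpT
  rw [mul_one_sub, hcancel]
  ring

lemma occupancy_denom_pos (hB : 0 ≤ B) (hC : 0 < C) (hBC : B + C ≤ 1) (hσ : 0 ≤ σ)
    (hTs : 0 < Ts) (hTc : 0 ≤ Tc) {u : ℝ} (hu0 : 0 < u) (hu1 : u ≤ 1) :
    0 < B * u * σ + C * u * Ts + (1 - (B + C) * u) * Tc := by
  have hidle : 0 ≤ 1 - (B + C) * u := by nlinarith
  have : 0 < C * u * Ts := by positivity
  have : 0 ≤ B * u * σ := by positivity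
  have : 0 ≤ (1 - (B + C) * u) * Tc := mul_nonneg hidle hTc
  linarith

lemma occupancy_strictAntiOn (hB : 0 ≤ B) (hC : 0 < C) (hBC : B + C ≤ 1) (hσ : 0 ≤ σ)
    (hTs : 0 < Ts) (hTc : 0 < Tc) :
    StrictAntiOn
      (fun τL : ℝ => C * (1 - τL) * Ts /
        (B * (1 - τL) * σ + C * (1 - τL) * Ts + (1 - (B + C) * (1 - τL)) * Tc))
      (Ico 0 1) := by
  rintro x ⟨hx0, hx1⟩ y ⟨hy0, hy1⟩ hxy
  rw [div_lt_div_iff₀ (occupancy_denom_pos hB hC hBC hσ hTs hTc.le (by linarith) (by linarith))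
    (occupancy_denom_pos hB hC hBC hσ hTs hTc.le (by linarith) (by linarith))]
  nlinarith [mul_pos (mul_pos (mul_pos hC hTs) hTc) (sub_pos.2 hxy)]

end Occupancy

/-- Wi-Fi's channel occupancy time ratio is strictly decreasing in the
LTE-U transmission probability `τ_L` on `[0,1)`. -/
theorem wifi_occupancy_strictAntiOn_tauL
    (Nw : ℕ) (hNw : 1 ≤ Nw) (τw : ℝ) (hτw0 : 0 < τw) (hτw1 : τw < 1)
    (σ Ts Tc : ℝ) (hσ : 0 < σ) (hTs : 0 < Ts) (hTc : 0 < Tc) :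
    StrictAntiOn
      (fun τL : ℝ =>
        let B := (1 - τw) ^ Nw
        let C := (Nw : ℝ) * τw * (1 - τw) ^ (Nw - 1)
        let pT := 1 - B * (1 - τL)
        let ps := C * (1 - τL) / pT
        (pT * ps * Ts) / ((1 - pT) * σ + pT * ps * Ts + pT * (1 - ps) * Tc))
      (Set.Ico 0 1) := by
  have hsilent : 0 < 1 - τw := by linarith
  have hB : 0 ≤ (1 - τw) ^ Nw := by positivity
  have hNw' : (0 : ℝ) < Nw := by exact_mod_cast hNw
  have hC : 0 < (Nw : ℝ) * τw * (1 - τw) ^ (Nw - 1) := by positivity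
  have hBC := one_sub_pow_add_mul_one_sub_pow_pred_le_one Nw hτw0.le hτw1.le
  refine (occupancy_strictAntiOn hB hC hBC hσ.le hTs hTc).congr fun τL ⟨hτL0, hτL1⟩ => ?_
  have hpT : 1 - (1 - τw) ^ Nw * (1 - τL) ≠ 0 := by nlinarith
  exact (occupancy_eq_of_ne hpT).symm
end

section
/- Let N_w ≥ 1 be a natural number and τ_w ∈ (0,1). Set B = (1−τ_w)^{N_w} and C = N_w·τ_w·(1−τ_w)^{N_w−1}. Then the conditional Wi-Fi success probability p_s^w(τ_L) = C·(1−τ_L)/(1 − B·(1−τ_L)) is a strictly monotonically decreasing function of τ_L on [0,1). That is, a more aggressive LTE-U channel access (larger τ_L) strictly reduces the probability that a channel access attempt results in a successful Wi-Fi transmission. -/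
/-!
Writing `B = (1 - τw) ^ Nw` and `C = Nw τw (1 - τw) ^ (Nw - 1)`, the success probability is
`g (1 - τL)` for the Möbius map `g x = C x / (1 - B x)`. Cross-multiplying, `g x < g y` reduces to
`C x < C y` because the `C B x y` terms cancel, so `g` is increasing wherever `B x < 1`; this holds
on `(0, 1]` since `0 < B < 1`, and `τL ↦ 1 - τL` reverses the order.
-/

theorem strictMonoOn_mul_div_one_sub_mul {K : Type*} [Field K] [LinearOrder K]
    [IsStrictOrderedRing K] {B C : K} (hC : 0 < C) :
    StrictMonoOn (fun x => C * x / (1 - B * x)) {x | B * x < 1} := by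
  intro x hx y hy hxy
  rw [div_lt_div_iff₀ (sub_pos.2 hx) (sub_pos.2 hy)]
  linear_combination mul_lt_mul_of_pos_left hxy hC

theorem mapsTo_one_sub_Ico_setOf_mul_lt_one {K : Type*} [Field K] [LinearOrder K]
    [IsStrictOrderedRing K] {B : K} (hB0 : 0 ≤ B) (hB1 : B < 1) :
    Set.MapsTo (fun t => 1 - t) (Set.Ico 0 1) {x | B * x < 1} :=
  fun _ ht => mul_lt_one_of_nonneg_of_lt_one_left hB0 hB1 (by linarith [ht.1])

/-- The conditional Wi-Fi success probability
`p_s^w(τ_L) = C·(1−τ_L)/(1 − B·(1−τ_L))` is strictly decreasing in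
`τ_L` on `[0,1)`. -/
theorem wifi_success_prob_strictAntiOn_tauL
    (Nw : ℕ) (hNw : 1 ≤ Nw) (τw : ℝ) (hτw0 : 0 < τw) (hτw1 : τw < 1) :
    StrictAntiOn
      (fun τL : ℝ =>
        ((Nw : ℝ) * τw * (1 - τw) ^ (Nw - 1)) * (1 - τL) /
          (1 - (1 - τw) ^ Nw * (1 - τL)))
      (Set.Ico 0 1) := by
  have hτw : 0 < 1 - τw := sub_pos.2 hτw1
  have hC : 0 < (Nw : ℝ) * τw * (1 - τw) ^ (Nw - 1) := by
    have hNw_pos : (0 : ℝ) < Nw := by exact_mod_cast hNw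
    positivity
  have hB1 : (1 - τw) ^ Nw < 1 := pow_lt_one₀ hτw.le (by linarith) (by omega)
  exact (strictMonoOn_mul_div_one_sub_mul hC).comp_strictAntiOn
    (fun _ _ _ _ hst => sub_lt_sub_left hst 1)
    (mapsTo_one_sub_Ico_setOf_mul_lt_one (pow_nonneg hτw.le Nw) hB1)
end
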